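/- Let 0 < ε, and run exact EGPO with π^{(0)} = π_ref = Uniform(Y), β = ε / (4 log|Y|), and η = 1/(β+3). Then for every T such that (2/β + 4/η) · log|Y| · (1 − ηβ)^T ≤ ε/2, both DualGap(π^{(T)}) ≤ ε and DualGap(π^{(T+1/2)}) ≤ ε hold; in particular an ε-Nash equilibrium of the unregularized game is reached after O((1/ε) · polylog(|Y|/ε)) iterations. -/

import Mathlib

open Real

/-- Tabular softmax policy. -/
noncomputable def softmax {Y : Type*} [Fintype Y] (θ : Y → ℝ) : Y → ℝ :=
  fun y => Real.exp (θ y) / ∑ y', Real.exp (θ y')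

/-- Kullback–Leibler divergence between distributions on a finite set. -/
noncomputable def KLdiv {Y : Type*} [Fintype Y] (p q : Y → ℝ) : ℝ :=
  ∑ y, p y * Real.log (p y / q y)

/-- `(P π)(y) = ∑ y' P(y, y') π(y')`. -/
noncomputable def matVec {Y : Type*} [Fintype Y] (P : Y → Y → ℝ) (p : Y → ℝ) : Y → ℝ :=
  fun y => ∑ y', P y y' * p y'

/-- The probability simplex over a finite set. -/
def simplex (Y : Type*) [Fintype Y] : Set (Y → ℝ) :=
  {p | (∀ y, 0 ≤ p y) ∧ ∑ y, p y = 1}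

/-- Value of the preference game: `V(π, π') = ∑ y y', π(y) P(y,y') π'(y')`. -/
noncomputable def Vval {Y : Type*} [Fintype Y] (P : Y → Y → ℝ) (p q : Y → ℝ) : ℝ :=
  ∑ y, ∑ y', p y * P y y' * q y'

/-- Regularized value `V_β(π, π') = V(π, π') − β KL(π‖π_ref) + β KL(π'‖π_ref)`. -/
noncomputable def Vreg {Y : Type*} [Fintype Y] (P : Y → Y → ℝ) (β : ℝ) (πref : Y → ℝ)
    (p q : Y → ℝ) : ℝ :=
  Vval P p q - β * KLdiv p πref + β * KLdiv q πref

/-- Regularized duality gap. -/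
noncomputable def DualGapReg {Y : Type*} [Fintype Y] (P : Y → Y → ℝ) (β : ℝ) (πref : Y → ℝ)
    (p : Y → ℝ) : ℝ :=
  (⨆ q : simplex Y, Vreg P β πref q.1 p) - (⨅ q : simplex Y, Vreg P β πref p q.1)

/-- Unregularized duality gap. -/
noncomputable def DualGap {Y : Type*} [Fintype Y] (P : Y → Y → ℝ) (p : Y → ℝ) : ℝ :=
  (⨆ q : simplex Y, Vval P q.1 p) - (⨅ q : simplex Y, Vval P p q.1)

/-!
Write `ρ = 1 - ηβ`. By the three-point identity of mirror descent, one extragradient step gives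
`η (V_β(q, π^{t+1/2}) - 1/2) + KL(q ‖ π^{t+1}) ≤ ρ KL(q ‖ π^t)` for every `q`, the cross term
being second order by Pinsker's inequality. Summing over `t` bounds the regret of the half
iterates, so their averages are approximate equilibria of the regularized game and, by
compactness of the simplex, it has an exact equilibrium `π*`. Against `π*` the payoff term is
nonnegative, hence `KL(π* ‖ π^t) ≤ ρ^t log |Y|`, and a half step loses only a constant factor.
Finally `(P π*)(y) ≤ 1/2 + β log |Y|` for every `y`, and Pinsker's inequality turns this into
`DualGap(π) ≤ 2 β log |Y| + √(2 KL(π* ‖ π))`.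
-/

open Finset Matrix

namespace EGPO

variable {Y : Type*}

/-- Logits of `π ∝ π_θ^{1-ηβ} π_ref^{ηβ} exp(η g)`, the mirror-descent step on the
`β`-regularized game with payoff gradient `g`. -/
def mirrorStep (β η : ℝ) (θref θ g : Y → ℝ) : Y → ℝ :=
  fun y => (1 - η * β) * θ y + η * β * θref y + η * g y

lemma mirrorStep_eq {β : ℝ} (hβ : β ≠ 0) (η : ℝ) (θref θ g : Y → ℝ) :
    mirrorStep β η θref θ g = fun y => (1 - η * β) * θ y + η * β * (θref y + g y / β) := by
  ext y
  simp only [mirrorStep]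
  field_simp
  ring

variable [Fintype Y]

noncomputable def egpoHalf (P : Y → Y → ℝ) (β η : ℝ) (θref θ : Y → ℝ) : Y → ℝ :=
  mirrorStep β η θref θ (matVec P (softmax θ))

noncomputable def egpoNext (P : Y → Y → ℝ) (β η : ℝ) (θref θ : Y → ℝ) : Y → ℝ :=
  mirrorStep β η θref θ (matVec P (softmax (egpoHalf P β η θref θ)))

section Softmax

variable [Nonempty Y] (θ : Y → ℝ)

lemma sum_exp_pos : 0 < ∑ y, exp (θ y) :=
  sum_pos (fun _ _ => exp_pos _) univ_nonempty

lemma softmax_pos (y : Y) : 0 < softmax θ y :=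
  div_pos (exp_pos _) (sum_exp_pos θ)

lemma softmax_mem_simplex : softmax θ ∈ simplex Y :=
  ⟨fun y => (softmax_pos θ y).le, by
    simp only [softmax]; rw [← sum_div, div_self (sum_exp_pos θ).ne']⟩

lemma log_softmax (y : Y) : log (softmax θ y) = θ y - log (∑ y', exp (θ y')) := by
  rw [softmax, log_div (exp_pos _).ne' (sum_exp_pos θ).ne', log_exp]

end Softmax

lemma klDiv_eq_sum_mul_log {p r : Y → ℝ} (hr : ∀ y, r y ≠ 0) :
    KLdiv p r = ∑ y, r y * (p y / r y * log (p y / r y)) :=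
  sum_congr rfl fun y _ => by rw [← mul_assoc, mul_div_cancel₀ _ (hr y)]

lemma klDiv_eq_sub {p r : Y → ℝ} (hp : ∀ y, 0 ≤ p y) (hr : ∀ y, 0 < r y) :
    KLdiv p r = ∑ y, p y * log (p y) - ∑ y, p y * log (r y) := by
  rw [KLdiv, ← sum_sub_distrib]
  refine sum_congr rfl fun y _ => ?_
  rcases (hp y).eq_or_lt with h | h
  · simp [← h]
  · rw [log_div h.ne' (hr y).ne']; ring

lemma klDiv_softmax [Nonempty Y] {p : Y → ℝ} (hp : p ∈ simplex Y) (θ : Y → ℝ) :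
    KLdiv p (softmax θ) = ∑ y, p y * log (p y) - p ⬝ᵥ θ + log (∑ y, exp (θ y)) := by
  rw [klDiv_eq_sub hp.1 (softmax_pos θ)]
  simp only [log_softmax, mul_sub, sum_sub_distrib, ← sum_mul, hp.2, dotProduct]
  ring

lemma sum_softmax_mul_log_softmax [Nonempty Y] (θ : Y → ℝ) :
    ∑ y, softmax θ y * log (softmax θ y) = softmax θ ⬝ᵥ θ - log (∑ y, exp (θ y)) := by
  simp only [log_softmax, mul_sub, sum_sub_distrib, ← sum_mul, (softmax_mem_simplex θ).2,
    dotProduct, one_mul]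

lemma continuous_klDiv {r : Y → ℝ} (hr : ∀ y, r y ≠ 0) : Continuous fun p => KLdiv p r := by
  simp only [klDiv_eq_sum_mul_log hr]
  fun_prop

lemma klDiv_sum_smul_le {ι : Type*} {s : Finset ι} {w : ι → ℝ} {p : ι → Y → ℝ} {r : Y → ℝ}
    (hw₀ : ∀ i ∈ s, 0 ≤ w i) (hw₁ : ∑ i ∈ s, w i = 1) (hp : ∀ i ∈ s, ∀ y, 0 ≤ p i y)
    (hr : ∀ y, 0 < r y) :
    KLdiv (∑ i ∈ s, w i • p i) r ≤ ∑ i ∈ s, w i * KLdiv (p i) r := by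
  have hr' : ∀ y, r y ≠ 0 := fun y => (hr y).ne'
  simp only [klDiv_eq_sum_mul_log hr', mul_sum]
  rw [sum_comm]
  refine sum_le_sum fun y _ => ?_
  have hJ := convexOn_mul_log.map_sum_le hw₀ hw₁
    (fun i hi => Set.mem_Ici.mpr (div_nonneg (hp i hi y) (hr y).le) : ∀ i ∈ s, p i y / r y ∈ _)
  have hmix : (∑ i ∈ s, w i • p i) y / r y = ∑ i ∈ s, w i * (p i y / r y) := by
    simp only [Finset.sum_apply, Pi.smul_apply, smul_eq_mul, sum_div, mul_div_assoc]
  rw [hmix]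
  calc r y * ((∑ i ∈ s, w i * (p i y / r y)) * log (∑ i ∈ s, w i * (p i y / r y)))
      ≤ r y * ∑ i ∈ s, w i * (p i y / r y * log (p i y / r y)) := by
        simpa only [smul_eq_mul] using mul_le_mul_of_nonneg_left hJ (hr y).le
    _ = _ := by rw [mul_sum]; exact sum_congr rfl fun i _ => by ring

lemma hasDerivAt_log_sub_pinskerRational {x : ℝ} (hx : 0 < x) :
    HasDerivAt (fun x => log x - (x - 1) * (5 * x + 1) / (2 * x * (x + 2)))
      ((x - 1) ^ 3 / (x ^ 2 * (x + 2) ^ 2)) x := by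
  have hden : 2 * x * (x + 2) ≠ 0 := by positivity
  have hq : HasDerivAt (fun x => (x - 1) * (5 * x + 1) / (2 * x * (x + 2)))
      ((((5 * x + 1) + (x - 1) * 5) * (2 * x * (x + 2))
        - (x - 1) * (5 * x + 1) * (2 * (x + 2) + 2 * x)) / (2 * x * (x + 2)) ^ 2) x := by
    simpa using (((hasDerivAt_id' x).sub_const 1).fun_mul
      (((hasDerivAt_id' x).const_mul 5).add_const 1)).fun_div
      (((hasDerivAt_id' x).const_mul 2).fun_mul ((hasDerivAt_id' x).add_const 2)) hden
  refine ((hasDerivAt_log hx.ne').sub hq).congr_deriv ?_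
  field_simp
  ring

/-- The rational lower bound for `log` behind Pinsker's inequality with constant `2`. -/
lemma pinskerRational_le_log {x : ℝ} (hx : 0 < x) :
    (x - 1) * (5 * x + 1) / (2 * x * (x + 2)) ≤ log x := by
  set φ : ℝ → ℝ := fun x => log x - (x - 1) * (5 * x + 1) / (2 * x * (x + 2))
  have hφ : ∀ y, 0 < y → HasDerivAt φ ((y - 1) ^ 3 / (y ^ 2 * (y + 2) ^ 2)) y :=
    fun y hy => hasDerivAt_log_sub_pinskerRational hy
  have hcont : ∀ a b, 0 < a → ContinuousOn φ (Set.Icc a b) := fun a b ha y hy =>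
    (hφ y (ha.trans_le hy.1)).continuousAt.continuousWithinAt
  have hdiff : ∀ a b, 0 < a → DifferentiableOn ℝ φ (interior (Set.Icc a b)) := by
    intro a b ha y hy
    rw [interior_Icc] at hy
    exact (hφ y (ha.trans hy.1)).differentiableAt.differentiableWithinAt
  suffices φ 1 ≤ φ x by norm_num [φ] at this; linarith
  rcases le_total x 1 with hx1 | hx1
  · refine antitoneOn_of_deriv_nonpos (convex_Icc x 1) (hcont x 1 hx) (hdiff x 1 hx)
      (fun y hy => ?_) ⟨le_rfl, hx1⟩ ⟨hx1, le_rfl⟩ hx1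
    rw [interior_Icc] at hy
    rw [(hφ y (hx.trans hy.1)).deriv]
    exact div_nonpos_of_nonpos_of_nonneg
      (Odd.pow_nonpos ⟨1, rfl⟩ (by linarith [hy.2])) (by positivity)
  · refine monotoneOn_of_deriv_nonneg (convex_Icc 1 x) (hcont 1 x one_pos) (hdiff 1 x one_pos)
      (fun y hy => ?_) ⟨le_rfl, hx1⟩ ⟨hx1, le_rfl⟩ hx1
    rw [interior_Icc] at hy
    rw [(hφ y (one_pos.trans hy.1)).deriv]
    exact div_nonneg (pow_nonneg (by linarith [hy.1]) 3) (by positivity)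

lemma sq_sub_div_le_mul_log {p q : ℝ} (hp : 0 ≤ p) (hq : 0 < q) :
    3 / 2 * ((p - q) ^ 2 / (p + 2 * q)) ≤ p * log (p / q) - p + q := by
  rcases hp.eq_or_lt with rfl | hp
  · field_simp; nlinarith
  have hrat : p * ((p / q - 1) * (5 * (p / q) + 1) / (2 * (p / q) * (p / q + 2)))
      = p - q + 3 / 2 * ((p - q) ^ 2 / (p + 2 * q)) := by
    field_simp
    ring
  nlinarith [mul_le_mul_of_nonneg_left (pinskerRational_le_log (div_pos hp hq)) hp.le]

/-- **Pinsker's inequality**. -/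
theorem sq_sum_abs_sub_le_two_mul_klDiv {p q : Y → ℝ} (hp : p ∈ simplex Y) (hq₀ : ∀ y, 0 < q y)
    (hq₁ : ∑ y, q y = 1) : (∑ y, |p y - q y|) ^ 2 ≤ 2 * KLdiv p q := by
  have hg : ∀ y ∈ univ, 0 < p y + 2 * q y := fun y _ => by linarith [hp.1 y, hq₀ y]
  have hTitu := sq_sum_div_le_sum_sq_div univ (fun y => |p y - q y|) hg
  have hsum : ∑ y, (p y + 2 * q y) = 3 := by
    rw [sum_add_distrib, ← mul_sum, hp.2, hq₁]; norm_num
  have hKL : ∑ y, 3 / 2 * ((p y - q y) ^ 2 / (p y + 2 * q y)) ≤ KLdiv p q := by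
    calc _ ≤ ∑ y, (p y * log (p y / q y) - p y + q y) :=
          sum_le_sum fun y _ => sq_sub_div_le_mul_log (hp.1 y) (hq₀ y)
      _ = KLdiv p q := by simp only [KLdiv, sum_add_distrib, sum_sub_distrib, hp.2, hq₁]; ring
  simp only [sq_abs, hsum, ← mul_sum] at hTitu hKL
  linarith

lemma klDiv_nonneg {p q : Y → ℝ} (hp : p ∈ simplex Y) (hq₀ : ∀ y, 0 < q y)
    (hq₁ : ∑ y, q y = 1) : 0 ≤ KLdiv p q := by
  nlinarith [sq_sum_abs_sub_le_two_mul_klDiv hp hq₀ hq₁, sq_nonneg (∑ y, |p y - q y|)]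

lemma sum_abs_sub_le_sqrt_klDiv {p q : Y → ℝ} (hp : p ∈ simplex Y) (hq₀ : ∀ y, 0 < q y)
    (hq₁ : ∑ y, q y = 1) : ∑ y, |p y - q y| ≤ √(2 * KLdiv p q) :=
  le_sqrt_of_sq_le (sq_sum_abs_sub_le_two_mul_klDiv hp hq₀ hq₁)

lemma klDiv_uniform_le {p : Y → ℝ} (hp : p ∈ simplex Y) :
    KLdiv p (fun _ => (Fintype.card Y : ℝ)⁻¹) ≤ log (Fintype.card Y) := by
  calc KLdiv p _ ≤ ∑ y, p y * log (Fintype.card Y) := sum_le_sum fun y _ => by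
        rw [div_inv_eq_mul]
        rcases (hp.1 y).eq_or_lt with h | h
        · simp [← h]
        have hN : (0 : ℝ) < Fintype.card Y := Fintype.card_pos_iff.mpr ⟨y⟩ |> Nat.cast_pos.mpr
        refine mul_le_mul_of_nonneg_left (log_le_log (by positivity) ?_) h.le
        exact mul_le_of_le_one_left hN.le (hp.2 ▸ single_le_sum (fun y _ => hp.1 y) (mem_univ y))
    _ = log (Fintype.card Y) := by rw [← sum_mul, hp.2, one_mul]

lemma klDiv_indicator_uniform [DecidableEq Y] (y₀ : Y) :
    KLdiv (fun y => if y = y₀ then 1 else 0) (fun _ => (Fintype.card Y : ℝ)⁻¹)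
      = log (Fintype.card Y) := by
  rw [KLdiv, sum_eq_single y₀ (fun y _ hy => by simp [hy]) (by simp)]
  simp

section Game

variable (P : Y → Y → ℝ)

lemma vval_eq_dotProduct (p q : Y → ℝ) : Vval P p q = p ⬝ᵥ (Matrix.of P *ᵥ q) := by
  simp only [Vval, dotProduct, mulVec, of_apply, mul_sum, mul_assoc]

lemma dotProduct_matVec (p q : Y → ℝ) : p ⬝ᵥ matVec P q = Vval P p q :=
  (vval_eq_dotProduct P p q).symm

lemma vval_sum_smul_right {ι : Type*} (s : Finset ι) (w : ι → ℝ) (q : Y → ℝ) (p : ι → Y → ℝ) :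
    Vval P q (∑ i ∈ s, w i • p i) = ∑ i ∈ s, w i * Vval P q (p i) := by
  simp only [vval_eq_dotProduct, mulVec_sum, mulVec_smul, dotProduct_sum, dotProduct_smul,
    smul_eq_mul]

lemma vval_indicator_left [DecidableEq Y] (y₀ : Y) (q : Y → ℝ) :
    Vval P (fun y => if y = y₀ then 1 else 0) q = matVec P q y₀ := by
  rw [← dotProduct_matVec, dotProduct, sum_eq_single y₀ (fun y _ hy => by simp [hy]) (by simp)]
  simp

variable {P}

lemma vval_add_vval_swap (hP : ∀ y y', P y y' + P y' y = 1) {p q : Y → ℝ}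
    (hp : ∑ y, p y = 1) (hq : ∑ y, q y = 1) : Vval P p q + Vval P q p = 1 := by
  have hswap : Vval P q p = ∑ y, ∑ y', p y * P y' y * q y' := by
    rw [Vval, sum_comm]; exact sum_congr rfl fun _ _ => sum_congr rfl fun _ _ => by ring
  rw [hswap, Vval, ← sum_add_distrib]
  simp_rw [← sum_add_distrib]
  calc _ = ∑ y, ∑ y', p y * q y' := sum_congr rfl fun y _ => sum_congr rfl fun y' _ => by
          linear_combination p y * q y' * hP y y'
    _ = 1 := by simp_rw [← mul_sum, hq, mul_one, hp]

lemma vval_self (hP : ∀ y y', P y y' + P y' y = 1) {p : Y → ℝ} (hp : ∑ y, p y = 1) :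
    Vval P p p = 1 / 2 := by
  linarith [vval_add_vval_swap hP hp hp]

lemma vreg_add_vreg_swap (hP : ∀ y y', P y y' + P y' y = 1) (β : ℝ) (r : Y → ℝ) {p q : Y → ℝ}
    (hp : ∑ y, p y = 1) (hq : ∑ y, q y = 1) : Vreg P β r p q + Vreg P β r q p = 1 := by
  simp only [Vreg]; linarith [vval_add_vval_swap hP hp hq]

lemma continuous_vreg_right (β : ℝ) {r : Y → ℝ} (hr : ∀ y, r y ≠ 0) (q : Y → ℝ) :
    Continuous (Vreg P β r q) := by
  have hV : Continuous (Vval P q) := by unfold Vval; fun_prop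
  exact (hV.sub continuous_const).add (continuous_const.mul (continuous_klDiv hr))

lemma vreg_sum_smul_le {β : ℝ} (hβ : 0 ≤ β) {r : Y → ℝ} (hr : ∀ y, 0 < r y) (q : Y → ℝ)
    {ι : Type*} {s : Finset ι} {w : ι → ℝ} {p : ι → Y → ℝ}
    (hw₀ : ∀ i ∈ s, 0 ≤ w i) (hw₁ : ∑ i ∈ s, w i = 1) (hp : ∀ i ∈ s, ∀ y, 0 ≤ p i y) :
    Vreg P β r q (∑ i ∈ s, w i • p i) ≤ ∑ i ∈ s, w i * Vreg P β r q (p i) := by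
  have hKL := mul_le_mul_of_nonneg_left (klDiv_sum_smul_le hw₀ hw₁ hp hr) hβ
  simp only [Vreg, vval_sum_smul_right, mul_add, mul_sub, sum_add_distrib, sum_sub_distrib,
    ← sum_mul, hw₁, one_mul, mul_sum] at hKL ⊢
  simp only [mul_left_comm β] at hKL
  linarith

lemma abs_matVec_sub_le (hP₀ : ∀ y y', 0 ≤ P y y') (hP₁ : ∀ y y', P y y' ≤ 1)
    {b b' : Y → ℝ} (hb : ∑ y, b y = ∑ y, b' y) (y : Y) :
    |matVec P b y - matVec P b' y| ≤ (∑ y', |b y' - b' y'|) / 2 := by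
  have hcentre : matVec P b y - matVec P b' y = ∑ y', (P y y' - 1 / 2) * (b y' - b' y') := by
    simp only [matVec, mul_sub, sub_mul, sum_sub_distrib, ← mul_sum, hb]
    ring
  rw [hcentre, sum_div]
  refine (abs_sum_le_sum_abs _ _).trans (sum_le_sum fun y' _ => ?_)
  have hP : |P y y' - 1 / 2| ≤ 1 / 2 :=
    abs_le.mpr ⟨by linarith [hP₀ y y'], by linarith [hP₁ y y']⟩
  rw [abs_mul]
  linarith [mul_le_mul_of_nonneg_right hP (abs_nonneg (b y' - b' y'))]

lemma abs_vval_sub_sub_le (hP₀ : ∀ y y', 0 ≤ P y y') (hP₁ : ∀ y y', P y y' ≤ 1)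
    (a a' : Y → ℝ) {b b' : Y → ℝ} (hb : ∑ y, b y = ∑ y, b' y) :
    |Vval P a b - Vval P a' b - (Vval P a b' - Vval P a' b')|
      ≤ (∑ y, |a y - a' y|) * (∑ y, |b y - b' y|) / 2 := by
  have hbil : Vval P a b - Vval P a' b - (Vval P a b' - Vval P a' b')
      = ∑ y, (a y - a' y) * (matVec P b y - matVec P b' y) := by
    simp only [← dotProduct_matVec, dotProduct, sub_mul, mul_sub, sum_sub_distrib]
  rw [hbil, mul_div_assoc, sum_mul]
  refine (abs_sum_le_sum_abs _ _).trans (sum_le_sum fun y _ => ?_)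
  rw [abs_mul]
  exact mul_le_mul_of_nonneg_left (abs_matVec_sub_le hP₀ hP₁ hb y) (abs_nonneg _)

end Game

/-- `p` is a symmetric Nash equilibrium of the regularized game, whose value is `1 / 2`. -/
def IsRegularizedNash (P : Y → Y → ℝ) (β : ℝ) (r p : Y → ℝ) : Prop :=
  p ∈ simplex Y ∧ ∀ q ∈ simplex Y, Vreg P β r q p ≤ 1 / 2

section Equilibrium

variable {P : Y → Y → ℝ} {β : ℝ} {r : Y → ℝ}

/-- Bounded regret of a play sequence against every deviation yields an equilibrium: the
running averages are `O(1/n)`-equilibria, and a cluster point of them is an exact one. -/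
theorem exists_isRegularizedNash_of_regret_le (hβ : 0 ≤ β) (hr : ∀ y, 0 < r y)
    {μ : ℕ → Y → ℝ} (hμ : ∀ t, μ t ∈ simplex Y) {C : ℝ}
    (hregret : ∀ q ∈ simplex Y, ∀ S, ∑ t ∈ range S, (Vreg P β r q (μ t) - 1 / 2) ≤ C) :
    ∃ p, IsRegularizedNash P β r p := by
  set avg : ℕ → Y → ℝ := fun n => ∑ t ∈ range (n + 1), ((n : ℝ) + 1)⁻¹ • μ t
  have hw₁ : ∀ n : ℕ, ∑ _t ∈ range (n + 1), ((n : ℝ) + 1)⁻¹ = 1 := fun n => by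
    rw [sum_const, card_range, nsmul_eq_mul]; push_cast; field_simp
  have havg_mem : ∀ n, avg n ∈ simplex Y := fun n =>
    (convex_stdSimplex ℝ Y).sum_mem (fun _ _ => by positivity) (hw₁ n) fun t _ => hμ t
  have havg : ∀ q ∈ simplex Y, ∀ n, Vreg P β r q (avg n) ≤ 1 / 2 + C * (1 / ((n : ℝ) + 1)) := by
    intro q hq n
    have hJ := vreg_sum_smul_le (P := P) hβ hr q (fun _ _ => by positivity) (hw₁ n)
      fun t _ => (hμ t).1
    have hR := hregret q hq (n + 1)
    rw [sum_sub_distrib, sum_const, card_range, nsmul_eq_mul] at hR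
    rw [← mul_sum] at hJ
    push_cast at hR
    calc _ ≤ _ := hJ
      _ = 1 / 2 + 1 / ((n : ℝ) + 1) * (∑ t ∈ range (n + 1), Vreg P β r q (μ t)
            - ((n : ℝ) + 1) * (1 / 2)) := by field_simp; ring
      _ ≤ 1 / 2 + C * (1 / ((n : ℝ) + 1)) := by rw [mul_comm C]; gcongr
  -- `simplex Y` is `stdSimplex ℝ Y` by definition
  obtain ⟨p, hp, φ, hφ, hlim⟩ := (isCompact_stdSimplex ℝ Y).tendsto_subseq havg_mem
  refine ⟨p, hp, fun q hq => le_of_tendsto_of_tendsto'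
    (((continuous_vreg_right β (fun y => (hr y).ne') q).tendsto p).comp hlim) ?_
    fun n => havg q hq (φ n)⟩
  simpa using tendsto_const_nhds.add
    ((tendsto_one_div_add_atTop_nhds_zero_nat.comp hφ.tendsto_atTop).const_mul C)

end Equilibrium

section Dynamics

variable [Nonempty Y] {P : Y → Y → ℝ}

/-- The three-point identity of mirror descent, for the payoff gradient `P μ`. -/
lemma klDiv_softmax_mirrorStep (β η : ℝ) (θref θ μ : Y → ℝ) {q : Y → ℝ} (hq : q ∈ simplex Y) :
    KLdiv q (softmax (mirrorStep β η θref θ (matVec P μ)))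
      = (1 - η * β) * (KLdiv q (softmax θ)
          - KLdiv (softmax (mirrorStep β η θref θ (matVec P μ))) (softmax θ))
        + η * β * (KLdiv q (softmax θref)
          - KLdiv (softmax (mirrorStep β η θref θ (matVec P μ))) (softmax θref))
        - η * (Vval P q μ - Vval P (softmax (mirrorStep β η θref θ (matVec P μ))) μ) := by
  set θ' := mirrorStep β η θref θ (matVec P μ)
  have hθ' : ∀ p : Y → ℝ, p ⬝ᵥ θ'
      = (1 - η * β) * (p ⬝ᵥ θ) + η * β * (p ⬝ᵥ θref) + η * Vval P p μ := by
    intro p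
    have : θ' = (1 - η * β) • θ + (η * β) • θref + η • matVec P μ := rfl
    simp only [this, dotProduct_add, dotProduct_smul, smul_eq_mul, dotProduct_matVec]
  simp only [klDiv_softmax hq, klDiv_softmax (softmax_mem_simplex θ'),
    sum_softmax_mul_log_softmax, hθ']
  ring

/-- Summing the three-point identities of both half steps leaves the error term
`V(π' - μ, μ - π)`, which Pinsker's inequality and AM-GM absorb into
`KL(π' ‖ μ) + (1 - ηβ) KL(μ ‖ π)`. -/
theorem klDiv_egpoNext_le (hP₀ : ∀ y y', 0 ≤ P y y') (hP₁ : ∀ y y', P y y' ≤ 1)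
    (hP : ∀ y y', P y y' + P y' y = 1) {β η : ℝ} (hη₀ : 0 ≤ η) (hη₂ : η ≤ 2)
    (hηρ : η ≤ 2 * (1 - η * β)) (θref θ : Y → ℝ) {q : Y → ℝ} (hq : q ∈ simplex Y) :
    η * (Vreg P β (softmax θref) q (softmax (egpoHalf P β η θref θ)) - 1 / 2)
      + KLdiv q (softmax (egpoNext P β η θref θ))
      ≤ (1 - η * β) * KLdiv q (softmax θ) := by
  set u := softmax θref
  set cur := softmax θ
  set mid := softmax (egpoHalf P β η θref θ)
  set nxt := softmax (egpoNext P β η θref θ)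
  have hcur := softmax_mem_simplex θ
  have hmid := softmax_mem_simplex (egpoHalf P β η θref θ)
  have hnxt := softmax_mem_simplex (egpoNext P β η θref θ)
  have hA : KLdiv q nxt = (1 - η * β) * (KLdiv q cur - KLdiv nxt cur)
      + η * β * (KLdiv q u - KLdiv nxt u) - η * (Vval P q mid - Vval P nxt mid) :=
    klDiv_softmax_mirrorStep β η θref θ mid hq
  have hB : KLdiv nxt mid = (1 - η * β) * (KLdiv nxt cur - KLdiv mid cur)
      + η * β * (KLdiv nxt u - KLdiv mid u) - η * (Vval P nxt cur - Vval P mid cur) :=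
    klDiv_softmax_mirrorStep β η θref θ cur hnxt
  have hmid_self := vval_self hP hmid.2
  have hX : η * (Vval P nxt mid - Vval P mid mid - (Vval P nxt cur - Vval P mid cur))
      ≤ KLdiv nxt mid + (1 - η * β) * KLdiv mid cur := by
    have hbil := (abs_le.mp (abs_vval_sub_sub_le hP₀ hP₁ nxt mid (hmid.2.trans hcur.2.symm))).2
    have h₁ := sq_sum_abs_sub_le_two_mul_klDiv hnxt (softmax_pos _) hmid.2
    have h₂ := sq_sum_abs_sub_le_two_mul_klDiv hmid (softmax_pos _) hcur.2
    have hk₁ := klDiv_nonneg hnxt (softmax_pos _) hmid.2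
    have hk₂ := klDiv_nonneg hmid (softmax_pos _) hcur.2
    set a := ∑ y, |nxt y - mid y|
    set b := ∑ y, |mid y - cur y|
    have hab : a * b / 2 ≤ (a ^ 2 + b ^ 2) / 4 := by nlinarith [sq_nonneg (a - b)]
    nlinarith [mul_le_mul_of_nonneg_left (hbil.trans hab) hη₀]
  have hk := klDiv_nonneg hmid (softmax_pos _) hcur.2
  simp only [Vreg]
  nlinarith

theorem klDiv_egpoHalf_le (hP₀ : ∀ y y', 0 ≤ P y y') (hP₁ : ∀ y y', P y y' ≤ 1)
    (hP : ∀ y y', P y y' + P y' y = 1) {β η : ℝ} (hη₀ : 0 ≤ η) (hρ : 3 * η ≤ 1 - η * β)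
    (θref θ : Y → ℝ) {p : Y → ℝ} (hp : IsRegularizedNash P β (softmax θref) p) :
    KLdiv p (softmax (egpoHalf P β η θref θ))
      ≤ (1 - η * β + 13 / 12 * η) * KLdiv p (softmax θ) := by
  set u := softmax θref
  set cur := softmax θ
  set mid := softmax (egpoHalf P β η θref θ)
  have hcur := softmax_mem_simplex θ
  have hmid := softmax_mem_simplex (egpoHalf P β η θref θ)
  have hB : KLdiv p mid = (1 - η * β) * (KLdiv p cur - KLdiv mid cur)
      + η * β * (KLdiv p u - KLdiv mid u) - η * (Vval P p cur - Vval P mid cur) :=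
    klDiv_softmax_mirrorStep β η θref θ cur hp.1
  have hgap : η * (Vreg P β u mid p - 1 / 2) ≤ 0 :=
    mul_nonpos_of_nonneg_of_nonpos hη₀ (by linarith [hp.2 mid hmid])
  have hpp := vval_self hP hp.1.2
  set x := ∑ y, |p y - mid y|
  set d := ∑ y, |p y - cur y|
  set e := ∑ y, |mid y - cur y|
  have hbil : |Vval P p cur - Vval P mid cur - (Vval P p p - Vval P mid p)| ≤ x * d / 2 := by
    have h := abs_vval_sub_sub_le hP₀ hP₁ p mid (b := cur) (b' := p) (hcur.2.trans hp.1.2.symm)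
    simpa only [abs_sub_comm (cur _) (p _)] using h
  have htri : x ≤ d + e := by
    rw [← sum_add_distrib]
    exact sum_le_sum fun y _ => abs_sub_comm (cur y) (mid y) ▸ abs_sub_le (p y) (cur y) (mid y)
  have hd := sq_sum_abs_sub_le_two_mul_klDiv hp.1 (softmax_pos θ) hcur.2
  have he := sq_sum_abs_sub_le_two_mul_klDiv hmid (softmax_pos θ) hcur.2
  have hke := klDiv_nonneg hmid (softmax_pos θ) hcur.2
  have hx0 : 0 ≤ x := sum_nonneg fun _ _ => abs_nonneg _
  have hd0 : 0 ≤ d := sum_nonneg fun _ _ => abs_nonneg _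
  -- AM-GM with weights tuned so that the `e`-term is absorbed by `-(1 - ηβ) KL(μ ‖ π)`
  have hxd : x * d / 2 ≤ 13 / 24 * d ^ 2 + 3 / 2 * e ^ 2 := by
    nlinarith [mul_le_mul_of_nonneg_right htri hd0, sq_nonneg (d - 6 * e)]
  simp only [Vreg] at hgap
  nlinarith [mul_le_mul_of_nonneg_left ((abs_le.mp hbil).1) hη₀,
    mul_le_mul_of_nonneg_left hxd hη₀, mul_le_mul_of_nonneg_right hρ hke]

theorem sum_vreg_egpoHalf_sub_le (hP₀ : ∀ y y', 0 ≤ P y y') (hP₁ : ∀ y y', P y y' ≤ 1)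
    (hP : ∀ y y', P y y' + P y' y = 1) {β η : ℝ} (hβ : 0 ≤ β) (hη₀ : 0 < η) (hη₂ : η ≤ 2)
    (hηρ : η ≤ 2 * (1 - η * β)) {θref : Y → ℝ} {θ : ℕ → Y → ℝ}
    (hθ : ∀ t, θ (t + 1) = egpoNext P β η θref (θ t)) {q : Y → ℝ} (hq : q ∈ simplex Y) (S : ℕ) :
    ∑ t ∈ range S, (Vreg P β (softmax θref) q (softmax (egpoHalf P β η θref (θ t))) - 1 / 2)
      ≤ KLdiv q (softmax (θ 0)) / η := by
  have hKL : ∀ t, 0 ≤ KLdiv q (softmax (θ t)) := fun t =>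
    klDiv_nonneg hq (softmax_pos _) (softmax_mem_simplex _).2
  rw [le_div_iff₀ hη₀, mul_comm, mul_sum]
  calc _ ≤ ∑ t ∈ range S, (KLdiv q (softmax (θ t)) - KLdiv q (softmax (θ (t + 1)))) := by
        refine sum_le_sum fun t _ => ?_
        have h := klDiv_egpoNext_le hP₀ hP₁ hP hη₀.le hη₂ hηρ θref (θ t) hq
        rw [← hθ] at h
        nlinarith [mul_nonneg (mul_nonneg hη₀.le hβ) (hKL t)]
    _ = KLdiv q (softmax (θ 0)) - KLdiv q (softmax (θ S)) := sum_range_sub' _ S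
    _ ≤ KLdiv q (softmax (θ 0)) := sub_le_self _ (hKL S)

theorem klDiv_egpo_le_pow (hP₀ : ∀ y y', 0 ≤ P y y') (hP₁ : ∀ y y', P y y' ≤ 1)
    (hP : ∀ y y', P y y' + P y' y = 1) {β η : ℝ} (hη₀ : 0 ≤ η) (hη₂ : η ≤ 2)
    (hηρ : η ≤ 2 * (1 - η * β)) {θref : Y → ℝ} {θ : ℕ → Y → ℝ}
    (hθ : ∀ t, θ (t + 1) = egpoNext P β η θref (θ t)) {p : Y → ℝ}
    (hp : IsRegularizedNash P β (softmax θref) p) (t : ℕ) :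
    KLdiv p (softmax (θ t)) ≤ (1 - η * β) ^ t * KLdiv p (softmax (θ 0)) := by
  induction t with
  | zero => simp
  | succ t ih =>
    have hstep := klDiv_egpoNext_le hP₀ hP₁ hP hη₀ hη₂ hηρ θref (θ t) hp.1
    have hmid := softmax_mem_simplex (egpoHalf P β η θref (θ t))
    have hswap := vreg_add_vreg_swap hP β (softmax θref) hp.1.2 hmid.2
    have hgap := hp.2 _ hmid
    rw [← hθ] at hstep
    rw [pow_succ', mul_assoc]
    nlinarith [mul_le_mul_of_nonneg_left ih (by linarith : 0 ≤ 1 - η * β)]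

end Dynamics

section DualGap

variable {P : Y → Y → ℝ}

theorem dualGap_le_of_matVec_le (hP : ∀ y y', P y y' + P y' y = 1) {p : Y → ℝ}
    (hp : p ∈ simplex Y) {M : ℝ} (hM : ∀ y, matVec P p y ≤ M) : DualGap P p ≤ 2 * M - 1 := by
  have : Nonempty (simplex Y) := ⟨⟨p, hp⟩⟩
  have hbest : ∀ q : simplex Y, Vval P q.1 p ≤ M := fun q => by
    rw [← dotProduct_matVec]
    calc _ ≤ ∑ y, q.1 y * M := sum_le_sum fun y _ => mul_le_mul_of_nonneg_left (hM y) (q.2.1 y)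
      _ = M := by rw [← sum_mul, q.2.2, one_mul]
  have hsup : (⨆ q : simplex Y, Vval P q.1 p) ≤ M := ciSup_le hbest
  have hinf : 1 - M ≤ ⨅ q : simplex Y, Vval P p q.1 := le_ciInf fun q => by
    linarith [hbest q, vval_add_vval_swap hP hp.2 q.2.2]
  rw [DualGap]
  linarith

variable [Nonempty Y] {β : ℝ}

lemma matVec_le_of_isRegularizedNash (hβ : 0 ≤ β) {p : Y → ℝ}
    (hp : IsRegularizedNash P β (fun _ => (Fintype.card Y : ℝ)⁻¹) p) (y : Y) :
    matVec P p y ≤ 1 / 2 + β * log (Fintype.card Y) := by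
  classical
  have hN : (0 : ℝ) < Fintype.card Y := Nat.cast_pos.mpr Fintype.card_pos
  have hKL : 0 ≤ KLdiv p (fun _ => (Fintype.card Y : ℝ)⁻¹) :=
    klDiv_nonneg hp.1 (fun _ => inv_pos.mpr hN) (by simp [card_univ, hN.ne'])
  have hdev := hp.2 (fun y' => if y' = y then 1 else 0)
    ⟨fun y' => by positivity, by simp⟩
  rw [Vreg, vval_indicator_left, klDiv_indicator_uniform] at hdev
  nlinarith [mul_nonneg hβ hKL]

theorem dualGap_le_of_isRegularizedNash (hP₀ : ∀ y y', 0 ≤ P y y') (hP₁ : ∀ y y', P y y' ≤ 1)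
    (hP : ∀ y y', P y y' + P y' y = 1) (hβ : 0 ≤ β) {p' : Y → ℝ}
    (hp' : IsRegularizedNash P β (fun _ => (Fintype.card Y : ℝ)⁻¹) p') {p : Y → ℝ}
    (hp₀ : ∀ y, 0 < p y) (hp₁ : ∑ y, p y = 1) :
    DualGap P p ≤ 2 * β * log (Fintype.card Y) + √(2 * KLdiv p' p) := by
  have hdist := sum_abs_sub_le_sqrt_klDiv hp'.1 hp₀ hp₁
  refine (dualGap_le_of_matVec_le hP ⟨fun y => (hp₀ y).le, hp₁⟩
    (M := 1 / 2 + β * log (Fintype.card Y) + √(2 * KLdiv p' p) / 2) fun y => ?_).trans_eq (by ring)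
  have hnear := (abs_le.mp (abs_matVec_sub_le hP₀ hP₁ (hp'.1.2.trans hp₁.symm) y)).1
  linarith [matVec_le_of_isRegularizedNash hβ hp' y]

end DualGap

lemma egpo_tolerance_le {L ε β η r K : ℝ} (hL : log 2 ≤ L) (hε : 0 < ε)
    (hβ : β = ε / (4 * L)) (hη : η = 1 / (β + 3)) (hr : 0 ≤ r)
    (hT : (2 / β + 4 / η) * L * r ≤ ε / 2) (hK : K ≤ 49 / 36 * (r * L)) :
    2 * β * L + √(2 * K) ≤ ε := by
  -- the constant `49 / 36` fits only because `16 log 2 > 98 / 9`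
  have hL₀ : 0.6931471803 < L := log_two_gt_d9.trans_le hL
  have hβ₀ : 0 < β := by rw [hβ]; positivity
  have hβL : 2 * β * L = ε / 2 := by rw [hβ]; field_simp; ring
  have hT' : (8 * L + 12 * ε) * (r * L) ≤ ε ^ 2 / 2 := by
    have h : 2 / β + 4 / η = 8 * L / ε + 4 * β + 12 := by rw [hη, hβ]; field_simp; ring
    have h' : (2 / β + 4 / η) * L * r * ε = (8 * L + 12 * ε) * (r * L) + 4 * β * (r * L) * ε := by
      rw [h]; field_simp; ring
    nlinarith [mul_le_mul_of_nonneg_right hT hε.le, mul_nonneg (mul_nonneg hβ₀.le hr) hε.le,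
      mul_nonneg hr (hL₀.le.trans' (by norm_num) : (0 : ℝ) ≤ L)]
  have hsqrt : √(2 * K) ≤ ε / 2 := sqrt_le_iff.mpr ⟨by positivity, by nlinarith⟩
  linarith

end EGPO

open EGPO in
/-- run exact EGPO with `π^{(0)} = π_ref = Uniform(Y)`, `β = ε/(4 log|Y|)`,
`η = 1/(β+3)`.  Then for every `T` with `(2/β + 4/η) · log|Y| · (1 − ηβ)^T ≤ ε/2`, both
`DualGap(π^{(T)}) ≤ ε` and `DualGap(π^{(T+1/2)}) ≤ ε`. -/
theorem egpo_exact_unregularized_nash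
    {Y : Type*} [Fintype Y] (hY : 2 ≤ Fintype.card Y)
    (P : Y → Y → ℝ)
    (hP0 : ∀ y y', 0 ≤ P y y') (hP1 : ∀ y y', P y y' ≤ 1)
    (hPsum : ∀ y y', P y y' + P y' y = 1)
    (ε : ℝ) (hε : 0 < ε)
    (β : ℝ) (hβdef : β = ε / (4 * Real.log (Fintype.card Y)))
    (η : ℝ) (hηdef : η = 1 / (β + 3))
    (θref : Y → ℝ) (href : softmax θref = fun _ => (Fintype.card Y : ℝ)⁻¹)
    (θ θhalf : ℕ → Y → ℝ)
    (h0 : softmax (θ 0) = fun _ => (Fintype.card Y : ℝ)⁻¹)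
    (hhalf : ∀ t, θhalf t = fun y =>
      (1 - η * β) * θ t y + η * β * (θref y + matVec P (softmax (θ t)) y / β))
    (hstep : ∀ t, θ (t + 1) = fun y =>
      (1 - η * β) * θ t y + η * β * (θref y + matVec P (softmax (θhalf t)) y / β))
    (T : ℕ)
    (hT : (2 / β + 4 / η) * Real.log (Fintype.card Y) * (1 - η * β) ^ T ≤ ε / 2) :
    DualGap P (softmax (θ T)) ≤ ε ∧ DualGap P (softmax (θhalf T)) ≤ ε := by
  have : Nonempty Y := Fintype.card_pos_iff.mp (by omega)
  have hL : log 2 ≤ log (Fintype.card Y) := log_le_log two_pos (by exact_mod_cast hY)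
  have hβ : 0 < β := hβdef ▸ div_pos hε (mul_pos four_pos ((log_pos one_lt_two).trans_le hL))
  have hη : 0 < η := hηdef ▸ by positivity
  have hρ : 1 - η * β = 3 * η := by rw [hηdef]; field_simp; ring
  have hη₂ : η ≤ 2 := by nlinarith [mul_pos hη hβ]
  have hηρ : η ≤ 2 * (1 - η * β) := by linarith
  have hmid : ∀ t, θhalf t = egpoHalf P β η θref (θ t) := fun t =>
    (hhalf t).trans (mirrorStep_eq hβ.ne' η θref (θ t) _).symm
  have hnext : ∀ t, θ (t + 1) = egpoNext P β η θref (θ t) := fun t =>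
    (hstep t).trans (by rw [hmid t]; exact (mirrorStep_eq hβ.ne' η θref (θ t) _).symm)
  obtain ⟨p, hp⟩ := exists_isRegularizedNash_of_regret_le hβ.le (softmax_pos θref)
    (fun t => softmax_mem_simplex (θhalf t)) fun q hq S => by
      simpa only [hmid] using
        (sum_vreg_egpoHalf_sub_le hP0 hP1 hPsum hβ.le hη hη₂ hηρ hnext hq S).trans
          (div_le_div_of_nonneg_right (h0 ▸ klDiv_uniform_le hq) hη.le)
  have hcur := (klDiv_egpo_le_pow hP0 hP1 hPsum hη.le hη₂ hηρ hnext hp T).trans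
    (mul_le_mul_of_nonneg_left (h0 ▸ klDiv_uniform_le hp.1) (pow_nonneg (by linarith) T))
  have hcur₀ := klDiv_nonneg hp.1 (softmax_pos (θ T)) (softmax_mem_simplex _).2
  have hhalfT := hmid T ▸ klDiv_egpoHalf_le hP0 hP1 hPsum hη.le (by linarith) θref (θ T) hp
  have hcoef : 1 - η * β + 13 / 12 * η ≤ 49 / 36 := by nlinarith [mul_pos hη hβ]
  rw [href] at hp
  have hgap : ∀ ϑ, KLdiv p (softmax ϑ) ≤ 49 / 36 * ((1 - η * β) ^ T * log (Fintype.card Y))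
      → DualGap P (softmax ϑ) ≤ ε := fun ϑ hK =>
    (dualGap_le_of_isRegularizedNash hP0 hP1 hPsum hβ.le hp (softmax_pos ϑ)
      (softmax_mem_simplex ϑ).2).trans
      (egpo_tolerance_le hL hε hβdef hηdef (pow_nonneg (by linarith) T) hT hK)
  exact ⟨hgap _ (by linarith), hgap _ (hhalfT.trans (mul_le_mul hcoef hcur hcur₀ (by norm_num)))⟩
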